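/- arXiv:1009.5713 — 3 statements merged into one kernel-verified Lean document; each statement's English description precedes it below -/
import Mathlib

section
/- There is a unique complex number c with positive imaginary part such that 0 is periodic of exact period 3 under z ↦ z² + c; equivalently, the polynomial c³ + 2c² + c + 1 = 0 (obtained from f_c³(0) = 0, excluding c = 0) has exactly one root with positive imaginary part. -/
open Complex

lemma sum3 {a b e : ℂ} (ha : a ^ 3 + 2 * a ^ 2 + a + 1 = 0)
    (hb : b ^ 3 + 2 * b ^ 2 + b + 1 = 0) (he : e ^ 3 + 2 * e ^ 2 + e + 1 = 0)
    (hab : a ≠ b) (hae : a ≠ e) (hbe : b ≠ e) : a + b + e = -2 := by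
  have h1 : (a - e) * (a ^ 2 + a * e + e ^ 2 + 2 * a + 2 * e + 1) = 0 := by
    linear_combination ha - he
  have h2 : (b - e) * (b ^ 2 + b * e + e ^ 2 + 2 * b + 2 * e + 1) = 0 := by
    linear_combination hb - he
  have h1' := (mul_eq_zero.mp h1).resolve_left (sub_ne_zero.mpr hae)
  have h2' := (mul_eq_zero.mp h2).resolve_left (sub_ne_zero.mpr hbe)
  have h3 : (a - b) * (a + b + e + 2) = 0 := by linear_combination h1' - h2'
  have := (mul_eq_zero.mp h3).resolve_left (sub_ne_zero.mpr hab)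
  linear_combination this

lemma conj_root {a : ℂ} (ha : a ^ 3 + 2 * a ^ 2 + a + 1 = 0) :
    (starRingEnd ℂ) a ^ 3 + 2 * (starRingEnd ℂ) a ^ 2 + (starRingEnd ℂ) a + 1 = 0 := by
  have := congrArg (starRingEnd ℂ) ha
  simpa [map_ofNat] using this

/-- There is exactly one complex root of `c³ + 2c² + c + 1` with positive
imaginary part (Douady's rabbit parameter). -/
theorem stmt7 :
    ∃! c : ℂ, 0 < c.im ∧ c ^ 3 + 2 * c ^ 2 + c + 1 = 0 := by
  -- real root by IVT
  obtain ⟨t, _, ht0⟩ : ∃ t ∈ Set.Icc (-2 : ℝ) (-1), t ^ 3 + 2 * t ^ 2 + t + 1 = 0 := by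
    have hc : ContinuousOn (fun t : ℝ => t ^ 3 + 2 * t ^ 2 + t + 1) (Set.Icc (-2) (-1)) := by
      fun_prop
    have := intermediate_value_Icc (by norm_num : (-2:ℝ) ≤ -1) hc
    have h0 : (0:ℝ) ∈ Set.Icc ((-2:ℝ)^3 + 2*(-2)^2 + (-2) + 1) ((-1:ℝ)^3 + 2*(-1)^2 + (-1) + 1) := by
      norm_num
    obtain ⟨t, htmem, hteq⟩ := this h0
    exact ⟨t, htmem, hteq⟩
  have hdisc : 0 < 3 * t ^ 2 + 4 * t := by nlinarith [sq_nonneg t, sq_nonneg (t+1), sq_nonneg (t+2)]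
  set s : ℝ := Real.sqrt (3 * t ^ 2 + 4 * t) with hs_def
  have hs_pos : 0 < s := Real.sqrt_pos.mpr hdisc
  have hs_sq : (s : ℝ) ^ 2 = 3 * t ^ 2 + 4 * t := Real.sq_sqrt hdisc.le
  set c : ℂ := (↑(-(t + 2) / 2) : ℂ) + (↑(s / 2) : ℂ) * I with hc_def
  have hcim : c.im = s / 2 := by simp [hc_def]
  have hsC : (s : ℂ) ^ 2 = 3 * (t:ℂ) ^ 2 + 4 * t := by
    exact_mod_cast hs_sq
  have htC : (t : ℂ) ^ 3 + 2 * (t:ℂ) ^ 2 + t + 1 = 0 := by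
    exact_mod_cast ht0
  have hq : c ^ 2 + ((t:ℂ) + 2) * c + ((t:ℂ) ^ 2 + 2 * t + 1) = 0 := by
    rw [hc_def]
    push_cast
    linear_combination (-1/4 : ℂ) * hsC + (((s:ℂ)^2)/4) * I_sq
  have hc_root : c ^ 3 + 2 * c ^ 2 + c + 1 = 0 := by
    linear_combination (c - (t:ℂ)) * hq + htC
  refine ⟨c, ⟨by rw [hcim]; positivity, hc_root⟩, ?_⟩
  rintro d ⟨hdim, hd⟩
  by_contra hne
  have hcim' : 0 < c.im := by rw [hcim]; positivity
  have hcc : c ≠ (starRingEnd ℂ) c := by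
    intro h
    have := Complex.conj_eq_iff_im.mp h.symm
    linarith
  have hdc' : d ≠ (starRingEnd ℂ) c := by
    intro h
    have : d.im = -c.im := by rw [h]; simp
    linarith
  have hd'c : (starRingEnd ℂ) d ≠ c := by
    intro h
    have : -d.im = c.im := by rw [← h]; simp
    linarith
  have hd'c' : (starRingEnd ℂ) d ≠ (starRingEnd ℂ) c := fun h => hne (starRingEnd ℂ |>.injective h)
  have h1 : d + c + (starRingEnd ℂ) c = -2 :=
    sum3 hd hc_root (conj_root hc_root) (Ne.symm (fun h => hne h.symm)) hdc' hcc
  have h2 : (starRingEnd ℂ) d + c + (starRingEnd ℂ) c = -2 :=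
    sum3 (conj_root hd) hc_root (conj_root hc_root) hd'c hd'c' hcc
  have : d = (starRingEnd ℂ) d := by linear_combination h1 - h2
  have := Complex.conj_eq_iff_im.mp this.symm
  linarith
end

section
/- A nonnegative square real matrix has a real nonnegative eigenvalue equal to its spectral radius. -/
open Polynomial Matrix Filter Topology Finset

namespace PFaux

attribute [local instance] Matrix.linftyOpSeminormedAddCommGroup Matrix.linftyOpNormedAddCommGroup Matrix.linftyOpNormedSpace Matrix.linftyOpNormedRing Matrix.linftyOpNormedAlgebra

variable {n : ℕ}

lemma charpoly_eval {R : Type*} [CommRing R] (M : Matrix (Fin n) (Fin n) R) (t : R) :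
    M.charpoly.eval t = (t • (1 : Matrix (Fin n) (Fin n) R) - M).det := by
  rw [Matrix.charpoly, ← Polynomial.coe_evalRingHom, RingHom.map_det]
  congr 1
  ext i j
  by_cases h : i = j <;> simp [h, charmatrix_apply, one_apply, diagonal_apply]

lemma entry_le_norm {α : Type*} [SeminormedAddCommGroup α]
    (A : Matrix (Fin n) (Fin n) α) (i j : Fin n) : ‖A i j‖ ≤ ‖A‖ := by
  have h : ‖A i j‖₊ ≤ ‖A‖₊ := by
    rw [Matrix.linfty_opNNNorm_def]
    exact le_trans (Finset.single_le_sum (f := fun j => ‖A i j‖₊) (fun _ _ => zero_le)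
      (Finset.mem_univ j)) (Finset.le_sup (f := fun i => ∑ j, ‖A i j‖₊) (Finset.mem_univ i))
  exact_mod_cast h

lemma map_pow' (M : Matrix (Fin n) (Fin n) ℝ) (k : ℕ) :
    (M.map Complex.ofReal) ^ k = (M ^ k).map Complex.ofReal := by
  have := map_pow (Complex.ofRealHom.mapMatrix (m := Fin n)) M k
  simp only [RingHom.mapMatrix_apply] at this
  exact this.symm

lemma norm_map' (M : Matrix (Fin n) (Fin n) ℝ) : ‖M.map Complex.ofReal‖ = ‖M‖ := by
  have h : ‖M.map Complex.ofReal‖₊ = ‖M‖₊ := by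
    rw [Matrix.linfty_opNNNorm_def, Matrix.linfty_opNNNorm_def]
    congr 1; ext i; congr 1; ext j; simp [Matrix.map_apply]
  calc ‖M.map Complex.ofReal‖ = (‖M.map Complex.ofReal‖₊ : ℝ) := rfl
    _ = (‖M‖₊ : ℝ) := by rw [h]
    _ = ‖M‖ := rfl

/-- spectrum membership implies charpoly root. -/
lemma root_of_mem_spectrum (A : Matrix (Fin n) (Fin n) ℂ) (μ : ℂ)
    (h : μ ∈ spectrum ℂ A) : A.charpoly.IsRoot μ := by
  rw [spectrum.mem_iff, Matrix.isUnit_iff_isUnit_det, isUnit_iff_ne_zero, not_not] at h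
  rw [IsRoot, charpoly_eval]
  rw [Algebra.algebraMap_eq_smul_one] at h
  exact h

/-- Gelfand bound: eventually `‖A^K‖ ≤ c^K`. -/
lemma eventually_pow_norm_le (A : Matrix (Fin n) (Fin n) ℂ) {c : ℝ}
    (hc : spectralRadius ℂ A < ENNReal.ofReal c) :
    ∀ᶠ K : ℕ in atTop, ‖A ^ K‖ ≤ c ^ K := by
  haveI : CompleteSpace (Matrix (Fin n) (Fin n) ℂ) := FiniteDimensional.complete ℂ _
  have hcpos : 0 < c := by
    by_contra hc0
    push_neg at hc0
    rw [ENNReal.ofReal_eq_zero.mpr hc0] at hc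
    exact (not_lt.mpr zero_le) hc
  have hg := spectrum.pow_norm_pow_one_div_tendsto_nhds_spectralRadius A
  have hev : ∀ᶠ K : ℕ in atTop, ENNReal.ofReal (‖A ^ K‖ ^ (1 / (K : ℝ))) < ENNReal.ofReal c :=
    hg.eventually_lt_const hc
  filter_upwards [hev, Filter.eventually_ge_atTop 1] with K hK hK1
  have h1 : ‖A ^ K‖ ^ (1 / (K : ℝ)) < c := by
    rwa [ENNReal.ofReal_lt_ofReal_iff hcpos] at hK
  have hKne : (K : ℝ) ≠ 0 := by positivity
  calc ‖A ^ K‖ = (‖A ^ K‖ ^ (1 / (K : ℝ))) ^ (K : ℕ) := by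
        rw [← Real.rpow_natCast (‖A ^ K‖ ^ (1 / (K : ℝ))), ← Real.rpow_mul (norm_nonneg _),
          one_div, inv_mul_cancel₀ hKne, Real.rpow_one]
    _ ≤ c ^ K := pow_le_pow_left₀ (Real.rpow_nonneg (norm_nonneg _) _) h1.le K

end PFaux

open PFaux

attribute [local instance] Matrix.linftyOpSeminormedAddCommGroup Matrix.linftyOpNormedAddCommGroup Matrix.linftyOpNormedSpace Matrix.linftyOpNormedRing Matrix.linftyOpNormedAlgebra

/-- Weak Perron–Frobenius: a nonnegative real square matrix has a real
nonnegative eigenvalue equal to its spectral radius. -/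
theorem stmt9 {n : ℕ} (hn : 0 < n) (M : Matrix (Fin n) (Fin n) ℝ)
    (hM : ∀ i j, 0 ≤ M i j) :
    ∃ r : ℝ, 0 ≤ r ∧ (∃ v : Fin n → ℝ, v ≠ 0 ∧ M.mulVec v = r • v) ∧
      IsGreatest {s : ℝ | ∃ μ : ℂ, (M.map Complex.ofReal).charpoly.IsRoot μ ∧
        s = ‖μ‖} r := by
  classical
  set A : Matrix (Fin n) (Fin n) ℂ := M.map Complex.ofReal with hA
  set q : ℂ[X] := A.charpoly with hqdef
  have hq0 : q ≠ 0 := (Matrix.charpoly_monic A).ne_zero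
  have hqmap : q = M.charpoly.map Complex.ofRealHom := by
    rw [hqdef, hA]
    exact (Matrix.charpoly_map M (Complex.ofRealHom : ℝ →+* ℂ))
  -- roots & max modulus
  have hdeg : q.natDegree = n := by
    rw [hqdef]
    simpa using Matrix.charpoly_natDegree_eq_dim A
  have hroots_ne : q.roots.toFinset.Nonempty := by
    obtain ⟨z, hz⟩ := Complex.exists_root (f := q) (by
      rw [Polynomial.degree_eq_natDegree hq0, hdeg]; exact_mod_cast hn)
    exact ⟨z, Multiset.mem_toFinset.mpr (Polynomial.mem_roots'.mpr ⟨hq0, hz⟩)⟩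
  set F : Finset ℝ := q.roots.toFinset.image (fun z : ℂ => ‖z‖) with hF
  have hFne : F.Nonempty := hroots_ne.image _
  set r : ℝ := F.max' hFne with hrdef
  have hSeq : {s : ℝ | ∃ μ : ℂ, q.IsRoot μ ∧ s = ‖μ‖} = (F : Set ℝ) := by
    ext s
    simp only [Set.mem_setOf_eq, hF, Finset.coe_image, Set.mem_image, Finset.mem_coe,
      Multiset.mem_toFinset, Polynomial.mem_roots']
    constructor
    · rintro ⟨μ, h1, rfl⟩; exact ⟨μ, ⟨hq0, h1⟩, rfl⟩
    · rintro ⟨μ, ⟨_, h1⟩, rfl⟩; exact ⟨μ, h1, rfl⟩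
  have habs_le : ∀ μ : ℂ, q.IsRoot μ → ‖μ‖ ≤ r := by
    intro μ hμ
    exact Finset.le_max' _ _ (Finset.mem_image.mpr
      ⟨μ, Multiset.mem_toFinset.mpr (Polynomial.mem_roots'.mpr ⟨hq0, hμ⟩), rfl⟩)
  have hgreat : IsGreatest {s : ℝ | ∃ μ : ℂ, q.IsRoot μ ∧ s = ‖μ‖} r := by
    constructor
    · rw [hSeq]
      exact F.max'_mem hFne
    · rintro s ⟨μ, h1, rfl⟩
      exact habs_le μ h1
  obtain ⟨μ, hμroot, hμabs⟩ : ∃ μ : ℂ, q.IsRoot μ ∧ ‖μ‖ = r := by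
    have := hgreat.1
    obtain ⟨μ, h1, h2⟩ := this
    exact ⟨μ, h1, h2.symm⟩
  have hr0 : 0 ≤ r := hμabs ▸ norm_nonneg μ
  -- the main analytic fact
  have hroot : M.charpoly.IsRoot r := by
    by_contra hpr
    rw [Polynomial.IsRoot] at hpr
    -- `r` is not a complex root either
    have hqr : q.eval (r : ℂ) ≠ 0 := by
      rw [hqmap]
      intro hc
      apply hpr
      have h2 : Complex.ofRealHom (M.charpoly.eval r) = 0 := by
        rw [← Polynomial.eval₂_at_apply, ← Polynomial.eval_map]
        exact hc
      simpa using h2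
    have hrpos : 0 < r := by
      rcases hr0.lt_or_eq with h | h
      · exact h
      · exfalso
        apply hqr
        have hμ0 : μ = 0 := by
          have : ‖μ‖ = 0 := by rw [hμabs, ← h]
          simpa using this
        have h4 : (r : ℂ) = 0 := by exact_mod_cast h.symm
        rw [h4]
        simpa [hμ0] using hμroot
    -- complex eigenvector for μ
    have hdetμ : (μ • (1 : Matrix (Fin n) (Fin n) ℂ) - A).det = 0 := by
      rw [← charpoly_eval]; exact hμroot
    obtain ⟨w, hw, hw0⟩ := (Matrix.exists_mulVec_eq_zero_iff).mpr hdetμ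
    have hAw : A.mulVec w = μ • w := by
      rw [sub_mulVec, sub_eq_zero, smul_mulVec, Matrix.one_mulVec] at hw0
      exact hw0.symm
    obtain ⟨i, hwi⟩ := Function.ne_iff.mp hw
    set u : Fin n → ℝ := fun j => ‖w j‖ with hu
    have hui : 0 < u i := norm_pos_iff.mpr hwi
    -- entries of powers of M are nonnegative
    have hMk : ∀ k : ℕ, ∀ a b, 0 ≤ (M ^ k) a b := by
      intro k
      induction k with
      | zero => intro a b; by_cases h : a = b <;> simp [h, Matrix.one_apply]
      | succ k ih =>
        intro a b
        rw [pow_succ, Matrix.mul_apply]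
        exact Finset.sum_nonneg fun j _ => mul_nonneg (ih a j) (hM j b)
    -- powers act on the eigenvector
    have hAkw : ∀ k : ℕ, (A ^ k).mulVec w = (μ ^ k) • w := by
      intro k
      induction k with
      | zero => simp [Matrix.one_mulVec]
      | succ k ih =>
        rw [pow_succ, ← Matrix.mulVec_mulVec, hAw, Matrix.mulVec_smul, ih, smul_smul,
          ← pow_succ']
    -- the key inequality
    have hkey : ∀ k : ℕ, r ^ k * u i ≤ ((M ^ k).mulVec u) i := by
      intro k
      have h1 : ((A ^ k).mulVec w) i = μ ^ k * w i := by rw [hAkw]; simp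
      have h2 : ‖μ ^ k * w i‖ = r ^ k * u i := by
        rw [norm_mul, norm_pow, hμabs]
      rw [← h2, ← h1]
      have h3 : ((A ^ k).mulVec w) i = ∑ j, (A ^ k) i j * w j := by
        simp [Matrix.mulVec, dotProduct]
      rw [h3]
      calc ‖∑ j, (A ^ k) i j * w j‖
          ≤ ∑ j, ‖(A ^ k) i j * w j‖ := norm_sum_le _ _
        _ = ∑ j, (M ^ k) i j * u j := by
            refine Finset.sum_congr rfl fun j _ => ?_
            rw [norm_mul, hA, map_pow', Matrix.map_apply, Complex.norm_real, Real.norm_eq_abs,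
              abs_of_nonneg (hMk k i j)]
        _ = ((M ^ k).mulVec u) i := by simp [Matrix.mulVec, dotProduct]
    -- no eigenvalues of `M` at or beyond `r`
    have hdet2 : ∀ t : ℝ, r ≤ t → IsUnit (t • (1 : Matrix (Fin n) (Fin n) ℝ) - M).det := by
      intro t ht
      rw [isUnit_iff_ne_zero, ← charpoly_eval]
      intro hc
      have hct : q.IsRoot (t : ℂ) := by
        rw [hqmap, Polynomial.IsRoot, Polynomial.eval_map]
        have h5 : M.charpoly.eval₂ Complex.ofRealHom (Complex.ofRealHom t)
            = Complex.ofRealHom (M.charpoly.eval t) := Polynomial.eval₂_at_apply _ _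
        rw [hc] at h5
        simpa using h5
      have h1 := habs_le _ hct
      rw [Complex.norm_real, Real.norm_eq_abs, abs_of_nonneg (hr0.trans ht)] at h1
      have htr : t = r := le_antisymm h1 ht
      rw [htr] at hc
      exact hpr hc
    -- the resolvent vector and its continuity at r
    set Y : ℝ → (Fin n → ℝ) :=
      fun t => ((t • (1 : Matrix (Fin n) (Fin n) ℝ) - M)⁻¹).mulVec u with hY
    have hYc : ContinuousAt Y r := by
      have h1 : Continuous (fun t : ℝ => t • (1 : Matrix (Fin n) (Fin n) ℝ) - M) :=
        (continuous_id.smul continuous_const).sub continuous_const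
      have h2 : ContinuousAt Inv.inv ((r : ℝ) • (1 : Matrix (Fin n) (Fin n) ℝ) - M) := by
        refine continuousAt_matrix_inv _ ?_
        have he : (Ring.inverse : ℝ → ℝ) = Inv.inv := by
          funext x; exact Ring.inverse_eq_inv x
        rw [he]
        exact continuousAt_inv₀ (isUnit_iff_ne_zero.mp (hdet2 r le_rfl))
      have h3 : Continuous (fun N : Matrix (Fin n) (Fin n) ℝ => N.mulVec u) :=
        continuous_id.matrix_mulVec continuous_const
      exact h3.continuousAt.comp (ContinuousAt.comp (x := r) h2 h1.continuousAt)
    set B : ℝ := ‖Y r‖ + 1 with hBdef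
    have hBpos : 0 < B := by positivity
    have hnear : ∀ᶠ t in 𝓝 r, ‖Y t‖ ≤ B := by
      have h := hYc (Metric.ball_mem_nhds (Y r) one_pos)
      filter_upwards [h] with t ht
      have : dist (Y t) (Y r) < 1 := Metric.mem_ball.mp ht
      rw [dist_eq_norm] at this
      calc ‖Y t‖ = ‖Y t - Y r + Y r‖ := by rw [sub_add_cancel]
        _ ≤ ‖Y t - Y r‖ + ‖Y r‖ := norm_add_le _ _
        _ ≤ B := by rw [hBdef]; linarith
    obtain ⟨δ, hδpos, hδ⟩ := Metric.eventually_nhds_iff.mp hnear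
    -- the main estimate
    have main : ∀ t : ℝ, r < t → dist t r < δ → u i / (t - r) ≤ B := by
      intro t htr htδ
      have htpos : 0 < t := lt_of_le_of_lt hr0 htr
      obtain ⟨c, hc1, hc2⟩ := exists_between htr
      have hcpos : 0 < c := lt_of_le_of_lt hr0 hc1
      -- Gelfand bound
      have hsr : spectralRadius ℂ A ≤ ENNReal.ofReal r := by
        rw [spectralRadius]
        refine iSup₂_le fun z hz => ?_
        have hzr : ‖z‖ ≤ r := by
          have := habs_le z (root_of_mem_spectrum A z hz)
          exact this
        rw [← ENNReal.ofReal_coe_nnreal, coe_nnnorm]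
        exact ENNReal.ofReal_le_ofReal hzr
      have hev := eventually_pow_norm_le A
        (lt_of_le_of_lt hsr ((ENNReal.ofReal_lt_ofReal_iff hcpos).mpr hc1))
      have hevM : ∀ᶠ K : ℕ in atTop, ‖M ^ K‖ ≤ c ^ K := by
        filter_upwards [hev] with K hK
        rwa [hA, map_pow', PFaux.norm_map'] at hK
      -- partial sums
      set N : Matrix (Fin n) (Fin n) ℝ := t • (1 : Matrix (Fin n) (Fin n) ℝ) - M with hN
      have hNunit : IsUnit N.det := hdet2 t htr.le
      set P : ℕ → (Fin n → ℝ) :=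
        fun K => ∑ k ∈ Finset.range K, (t ^ (k + 1))⁻¹ • (M ^ k).mulVec u with hP
      have htne : t ≠ 0 := htpos.ne'
      have hPK : ∀ K : ℕ, N.mulVec (P K) = u - (t ^ K)⁻¹ • (M ^ K).mulVec u := by
        intro K
        induction K with
        | zero => simp [hP, Matrix.one_mulVec]
        | succ K ih =>
          rw [hP]
          simp only [Finset.sum_range_succ]
          rw [Matrix.mulVec_add, ih, Matrix.mulVec_smul]
          have hstep : N.mulVec ((M ^ K).mulVec u)
              = t • (M ^ K).mulVec u - (M ^ (K + 1)).mulVec u := by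
            rw [hN, sub_mulVec, smul_mulVec, Matrix.one_mulVec, Matrix.mulVec_mulVec,
              ← pow_succ']
          have e1 : (t ^ (K + 1))⁻¹ * t = (t ^ K)⁻¹ := by
            rw [pow_succ, mul_inv, mul_assoc, inv_mul_cancel₀ htne, mul_one]
          rw [hstep, smul_sub, smul_smul, e1]
          abel
      have hPY : ∀ K : ℕ, P K = Y t - (t ^ K)⁻¹ • (N⁻¹).mulVec ((M ^ K).mulVec u) := by
        intro K
        have h1 : (N⁻¹).mulVec (N.mulVec (P K)) = P K := by
          rw [Matrix.mulVec_mulVec, Matrix.nonsing_inv_mul _ hNunit, Matrix.one_mulVec]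
        rw [← h1, hPK, Matrix.mulVec_sub, Matrix.mulVec_smul]
      have hL : ∀ K : ℕ, ∑ k ∈ Finset.range K, (t ^ (k + 1))⁻¹ * (r ^ k * u i) ≤ P K i := by
        intro K
        simp only [hP, Finset.sum_apply, Pi.smul_apply, smul_eq_mul]
        refine Finset.sum_le_sum fun k _ => ?_
        exact mul_le_mul_of_nonneg_left (hkey k) (by positivity)
      -- limit of the lower bound
      have L1 : Tendsto (fun K => ∑ k ∈ Finset.range K, (t ^ (k + 1))⁻¹ * (r ^ k * u i))
          atTop (𝓝 (u i / (t - r))) := by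
        have hgeom : HasSum (fun k : ℕ => (u i / t) * (r / t) ^ k)
            ((u i / t) * (1 - r / t)⁻¹) :=
          (hasSum_geometric_of_lt_one (div_nonneg hr0 htpos.le)
            ((div_lt_one htpos).mpr htr)).mul_left _
        have heq : (fun k : ℕ => (u i / t) * (r / t) ^ k)
            = fun k : ℕ => (t ^ (k + 1))⁻¹ * (r ^ k * u i) := by
          funext k
          rw [div_pow, pow_succ]
          field_simp
        rw [heq] at hgeom
        have htrne : t - r ≠ 0 := sub_ne_zero.mpr htr.ne'
        have hval : (u i / t) * (1 - r / t)⁻¹ = u i / (t - r) := by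
          field_simp
        rw [hval] at hgeom
        exact hgeom.tendsto_sum_nat
      -- limit of the upper bound
      have L2 : Tendsto (fun K => P K i) atTop (𝓝 (Y t i)) := by
        have herr : Tendsto
            (fun K : ℕ => (t ^ K)⁻¹ * ((N⁻¹).mulVec ((M ^ K).mulVec u)) i) atTop (𝓝 0) := by
          refine squeeze_zero_norm' (a := fun K : ℕ => (‖N⁻¹‖ * ‖u‖) * (c / t) ^ K) ?_ ?_
          · filter_upwards [hevM] with K hK
            have h1 : ‖((N⁻¹).mulVec ((M ^ K).mulVec u)) i‖
                ≤ ‖N⁻¹‖ * (‖M ^ K‖ * ‖u‖) := by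
              refine le_trans (norm_le_pi_norm _ i) ?_
              refine le_trans (Matrix.linfty_opNorm_mulVec _ _) ?_
              exact mul_le_mul_of_nonneg_left (Matrix.linfty_opNorm_mulVec _ _) (norm_nonneg _)
            rw [norm_mul, norm_inv, norm_pow, Real.norm_eq_abs, abs_of_pos htpos]
            calc (t ^ K)⁻¹ * ‖((N⁻¹).mulVec ((M ^ K).mulVec u)) i‖
                ≤ (t ^ K)⁻¹ * (‖N⁻¹‖ * (‖M ^ K‖ * ‖u‖)) := by
                  exact mul_le_mul_of_nonneg_left h1 (by positivity)
              _ ≤ (t ^ K)⁻¹ * (‖N⁻¹‖ * (c ^ K * ‖u‖)) := by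
                  refine mul_le_mul_of_nonneg_left ?_ (by positivity)
                  refine mul_le_mul_of_nonneg_left ?_ (norm_nonneg _)
                  exact mul_le_mul_of_nonneg_right hK (norm_nonneg _)
              _ = (‖N⁻¹‖ * ‖u‖) * (c / t) ^ K := by
                  rw [div_pow]
                  field_simp
          · have : Tendsto (fun K : ℕ => (c / t) ^ K) atTop (𝓝 0) := by
              apply tendsto_pow_atTop_nhds_zero_of_lt_one (by positivity)
              rw [div_lt_one htpos]
              exact hc2
            simpa using this.const_mul (‖N⁻¹‖ * ‖u‖)
        have heq : (fun K => P K i)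
            = fun K => Y t i - (t ^ K)⁻¹ * ((N⁻¹).mulVec ((M ^ K).mulVec u)) i := by
          funext K
          rw [hPY K]
          rfl
        rw [heq]
        have := herr.const_sub (Y t i)
        simpa using this
      have hfinal : u i / (t - r) ≤ Y t i := le_of_tendsto_of_tendsto' L1 L2 hL
      calc u i / (t - r) ≤ Y t i := hfinal
        _ ≤ ‖Y t‖ := le_trans (le_abs_self _) (norm_le_pi_norm (Y t) i)
        _ ≤ B := hδ htδ
    -- derive the contradiction
    set ε : ℝ := min δ (u i / B) with hε
    have hεpos : 0 < ε := lt_min hδpos (div_pos hui hBpos)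
    have h1 := main (r + ε / 2) (by linarith) (by
      rw [Real.dist_eq, add_sub_cancel_left, abs_of_pos (by linarith)]
      calc ε / 2 < ε := half_lt_self hεpos
        _ ≤ δ := min_le_left _ _)
    rw [add_sub_cancel_left] at h1
    have h2 : ε ≤ u i / B := min_le_right _ _
    have h3 : u i ≤ B * (ε / 2) := (div_le_iff₀ (by positivity)).mp h1
    have h4 : ε * B ≤ u i := (le_div_iff₀ hBpos).mp h2
    nlinarith
  -- produce the eigenvector
  have hdet : (r • (1 : Matrix (Fin n) (Fin n) ℝ) - M).det = 0 := by
    rw [← charpoly_eval]; exact hroot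
  obtain ⟨v, hv, h0⟩ := (Matrix.exists_mulVec_eq_zero_iff).mpr hdet
  refine ⟨r, hr0, ⟨v, hv, ?_⟩, hgreat⟩
  rw [sub_mulVec, sub_eq_zero] at h0
  rw [smul_mulVec, Matrix.one_mulVec] at h0
  exact h0.symm
end

section
/- Let τ : {1,...,N} → {1,...,N} be the dynamics function of a mapping scheme and ω : {1,...,N} → ℕ the local degree function with ω(x) ≥ 1. Define for x in the image of τ the value N(x) as the least common multiple over all directed paths ending at x of the product of weights along the path. If every cycle of τ through x has all weights 1, then N(x) divides the lcm of the products of weights over simple paths ending at x, and hence N(x) is finite. -/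
/-- Mapping-scheme signature, finite case: if every cycle through `x` carries
only weight-1 vertices, then the weight-product of any directed path ending at
`x` divides the lcm of products over paths of length `< N` ending at `x`. -/
theorem stmt18 (N : ℕ) (τ : Fin N → Fin N) (ω : Fin N → ℕ)
    (hω : ∀ x, 1 ≤ ω x) (x : Fin N)
    (hcyc : ∀ y k, 0 < k → τ^[k] y = y → (∃ j, τ^[j] y = x) →
      ∀ i, i < k → ω (τ^[i] y) = 1) :
    ∀ y k, τ^[k] y = x →
      (∏ i ∈ Finset.range k, ω (τ^[i] y)) ∣
        Finset.lcm
          ((Finset.range N ×ˢ (Finset.univ : Finset (Fin N))).filter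
            (fun p => τ^[p.1] p.2 = x))
          (fun p => ∏ i ∈ Finset.range p.1, ω (τ^[i] p.2)) := by
  intro y k
  induction k using Nat.strong_induction_on generalizing y with
  | _ k ih =>
  intro hk
  by_cases hkN : k < N
  · refine Finset.dvd_lcm (b := (k, y)) ?_
    simp only [Finset.mem_filter, Finset.mem_product, Finset.mem_range, Finset.mem_univ]
    exact ⟨⟨hkN, trivial⟩, hk⟩
  · push_neg at hkN
    obtain ⟨i, j, hij, hjN, heq⟩ :
        ∃ i j : ℕ, i < j ∧ j ≤ N ∧ τ^[i] y = τ^[j] y := by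
      obtain ⟨a, b, hab, heq⟩ := Fintype.exists_ne_map_eq_of_card_lt
        (fun a : Fin (N+1) => τ^[a.1] y) (by simp)
      rcases lt_or_gt_of_ne (fun h => hab (Fin.ext h) : a.1 ≠ b.1) with h | h
      · exact ⟨a, b, h, Nat.lt_succ_iff.mp b.2, heq⟩
      · exact ⟨b, a, h, Nat.lt_succ_iff.mp a.2, heq.symm⟩
    set c := j - i with hcdef
    have hc : 0 < c := by omega
    have hik : i ≤ k := by omega
    have hjk : j ≤ k := by omega
    have hz : τ^[c] (τ^[i] y) = τ^[i] y := by
      rw [← Function.iterate_add_apply]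
      have hci : c + i = j := by omega
      rw [hci]; exact heq.symm
    have hxz : τ^[k - i] (τ^[i] y) = x := by
      rw [← Function.iterate_add_apply]
      have : k - i + i = k := by omega
      rw [this]; exact hk
    have hone : ∀ t, t < c → ω (τ^[t] (τ^[i] y)) = 1 :=
      hcyc _ c hc hz ⟨k - i, hxz⟩
    have hk' : τ^[k - c] y = x := by
      have h1 : k - c = (k - j) + i := by omega
      rw [h1, Function.iterate_add_apply, heq, ← Function.iterate_add_apply]
      have h2 : k - j + j = k := by omega
      rw [h2]; exact hk
    have hprod : (∏ p ∈ Finset.range k, ω (τ^[p] y))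
        = ∏ p ∈ Finset.range (k - c), ω (τ^[p] y) := by
      have hk1 : k = j + (k - j) := by omega
      have hk2 : k - c = i + (k - j) := by omega
      have hj1 : j = i + c := by omega
      calc (∏ p ∈ Finset.range k, ω (τ^[p] y))
          = (∏ p ∈ Finset.range j, ω (τ^[p] y)) *
              ∏ t ∈ Finset.range (k - j), ω (τ^[j + t] y) := by
            conv_lhs => rw [hk1]
            exact Finset.prod_range_add _ _ _
        _ = ((∏ p ∈ Finset.range i, ω (τ^[p] y)) *
              ∏ t ∈ Finset.range c, ω (τ^[i + t] y)) *
              ∏ t ∈ Finset.range (k - j), ω (τ^[j + t] y) := by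
            rw [show Finset.range j = Finset.range (i + c) from by rw [hj1],
              Finset.prod_range_add]
        _ = (∏ p ∈ Finset.range i, ω (τ^[p] y)) *
              ∏ t ∈ Finset.range (k - j), ω (τ^[i + t] y) := by
            have e1 : (∏ t ∈ Finset.range c, ω (τ^[i + t] y)) = 1 := by
              apply Finset.prod_eq_one
              intro t ht
              rw [Finset.mem_range] at ht
              rw [add_comm, Function.iterate_add_apply]
              exact hone t ht
            have e2 : ∀ t, ω (τ^[j + t] y) = ω (τ^[i + t] y) := by
              intro t
              rw [add_comm j t, add_comm i t, Function.iterate_add_apply,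
                Function.iterate_add_apply, heq]
            rw [e1, mul_one]
            congr 1
            exact Finset.prod_congr rfl fun t _ => e2 t
        _ = ∏ p ∈ Finset.range (k - c), ω (τ^[p] y) := by
            rw [hk2, Finset.prod_range_add]
    rw [hprod]
    exact ih (k - c) (by omega) y hk'
end
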